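/- arXiv:1809.06155 — 4 statements merged into one kernel-verified Lean document; each statement's English description precedes it below -/
import Mathlib

section
/- Let Φ : ℝ≥0 → ℝ be twice continuously differentiable and convex, and define ψ(u) = (1/2) ∫₀ᵘ √(Φ''(v)) dv. Then for all u, v ≥ 0, |ψ(u) - ψ(v)|² ≤ (u - v)(Φ'(u) - Φ'(v)). -/
/-!
For `v ≤ u` (the other case is symmetric) both sides are integrals over `[v, u]`:
`ψ u - ψ v = ½ ∫ √Φ''` and, by the fundamental theorem of calculus,
`Φ' u - Φ' v = ∫ Φ'' = ∫ (√Φ'')²`. Cauchy–Schwarz against the constant `1` gives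
`(∫ √Φ'')² ≤ (u - v) ∫ Φ''`, even with a spare factor `1/4`.
-/

open Real MeasureTheory intervalIntegral

theorem sq_intervalIntegral_le_mul_intervalIntegral_sq {f : ℝ → ℝ} {a b : ℝ} (hab : a ≤ b)
    (hf : IntervalIntegrable f volume a b)
    (hf2 : IntervalIntegrable (fun x ↦ f x ^ 2) volume a b) :
    (∫ x in a..b, f x) ^ 2 ≤ (b - a) * ∫ x in a..b, f x ^ 2 := by
  -- `t ↦ ∫ (f - t)²` is a nonnegative quadratic polynomial, so its discriminant is `≤ 0`.
  have hquad : ∀ t : ℝ,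
      0 ≤ (b - a) * (t * t) + (-2 * ∫ x in a..b, f x) * t + ∫ x in a..b, f x ^ 2 := by
    intro t
    have hexpand : ∫ x in a..b, (f x - t) ^ 2 =
        (b - a) * (t * t) + (-2 * ∫ x in a..b, f x) * t + ∫ x in a..b, f x ^ 2 := by
      have hlin : IntervalIntegrable (fun x ↦ -2 * t * f x + t ^ 2) volume a b :=
        (hf.const_mul _).add intervalIntegrable_const
      calc ∫ x in a..b, (f x - t) ^ 2
          = ∫ x in a..b, (f x ^ 2 + (-2 * t * f x + t ^ 2)) := by congr 1; ext x; ring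
        _ = _ := by
          rw [integral_add hf2 hlin, integral_add (hf.const_mul _) intervalIntegrable_const,
            intervalIntegral.integral_const_mul, intervalIntegral.integral_const, smul_eq_mul]
          ring
    rw [← hexpand]
    exact integral_nonneg hab fun x _ ↦ sq_nonneg _
  have := discrim_le_zero hquad
  rw [discrim] at this
  linarith

theorem sq_half_integral_sqrt_deriv_deriv_le (Φ : ℝ → ℝ) (hΦ : ContDiff ℝ 2 Φ) {u v : ℝ} (hvu : v ≤ u)
    (hconv : ∀ x ∈ Set.Icc v u, 0 ≤ deriv (deriv Φ) x) :
    ((1 / 2) * ∫ x in v..u, √(deriv (deriv Φ) x)) ^ 2 ≤ (u - v) * (deriv Φ u - deriv Φ v) := by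
  have hΦ' : ContDiff ℝ 1 (deriv Φ) := hΦ.iterate_deriv' 1 1
  have hΦ''_cont : Continuous (deriv (deriv Φ)) := hΦ'.continuous_deriv le_rfl
  have hsqrt_cont : Continuous fun x ↦ √(deriv (deriv Φ) x) := hΦ''_cont.sqrt
  have hftc : deriv Φ u - deriv Φ v = ∫ x in v..u, √(deriv (deriv Φ) x) ^ 2 := by
    rw [← integral_deriv_eq_sub (fun x _ ↦ (hΦ'.differentiable one_ne_zero).differentiableAt)
      (hΦ''_cont.intervalIntegrable v u)]
    refine integral_congr fun x hx ↦ (sq_sqrt (hconv x ?_)).symm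
    rwa [Set.uIcc_of_le hvu] at hx
  have hCS := sq_intervalIntegral_le_mul_intervalIntegral_sq hvu
    (hsqrt_cont.intervalIntegrable v u) ((hsqrt_cont.pow 2).intervalIntegrable v u)
  have hnonneg : 0 ≤ (u - v) * ∫ x in v..u, √(deriv (deriv Φ) x) ^ 2 :=
    mul_nonneg (sub_nonneg.2 hvu) (integral_nonneg hvu fun x _ ↦ sq_nonneg _)
  rw [hftc]
  nlinarith

theorem stmt_0 (Φ : ℝ → ℝ) (hΦ : ContDiff ℝ 2 Φ)
    (hconv : ∀ v : ℝ, 0 ≤ v → 0 ≤ deriv (deriv Φ) v)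
    (ψ : ℝ → ℝ)
    (hψ : ∀ u : ℝ, ψ u = (1/2) * ∫ v in (0:ℝ)..u, Real.sqrt (deriv (deriv Φ) v))
    (u v : ℝ) (hu : 0 ≤ u) (hv : 0 ≤ v) :
    (ψ u - ψ v) ^ 2 ≤ (u - v) * (deriv Φ u - deriv Φ v) := by
  wlog hvu : v ≤ u with H
  · nlinarith [H Φ hΦ hconv ψ hψ v u hv hu (le_of_not_ge hvu)]
  have hsqrt_int : ∀ a b : ℝ, IntervalIntegrable (fun x ↦ √(deriv (deriv Φ) x)) volume a b :=
    ((hΦ.iterate_deriv' 0 2).continuous.sqrt).intervalIntegrable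
  have hψ_sub : ψ u - ψ v = (1 / 2) * ∫ x in v..u, √(deriv (deriv Φ) x) := by
    rw [hψ, hψ, ← mul_sub, integral_interval_sub_left (hsqrt_int 0 u) (hsqrt_int 0 v)]
  rw [hψ_sub]
  exact sq_half_integral_sqrt_deriv_deriv_le Φ hΦ hvu fun x hx ↦ hconv x (hv.trans hx.1)
end

section
/- Let a ∈ (0, d), r ∈ (0,1], and ρ ∈ L¹(ℝ^d) ∩ L^{p_a}(ℝ^d) nonnegative with p_a = d/(d−a). Then for every X ∈ ℝ^d, ∫_{|X−x| ≥ r} |X−x|^{−a} ρ(x) dx ≤ C_d (‖ρ‖_{L^{p_a}} + ‖ρ‖_{L¹})(1 + ln(1/r)), where C_d depends only on d. -/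
/-!
Split the region `r ≤ ‖X - x‖` at `‖X - x‖ = 1`. Beyond the unit sphere the kernel is at most `1`,
which costs `‖ρ‖₁`. On the annulus `r ≤ ‖X - x‖ ≤ 1`, Hölder's inequality with the conjugate
exponents `d / (d - a)` and `d / a` turns the kernel into `‖X - x‖ ^ (-d)`, whose integral over the
annulus is `d |B₁| log (1 / r)` in polar coordinates. Finally `t ^ (a / d) ≤ 1 + t`.
-/

open MeasureTheory

open Set Metric Module

theorem rpow_le_one_add_self {x e : ℝ} (hx : 0 ≤ x) (he₀ : 0 ≤ e) (he₁ : e ≤ 1) :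
    x ^ e ≤ 1 + x := by
  rcases le_total x 1 with h | h
  · linarith [Real.rpow_le_one hx h he₀]
  · linarith [Real.rpow_le_self_of_one_le h he₁]

theorem lintegral_one_lt_sub_norm_rpow_neg_mul_le {E : Type*} [NormedAddCommGroup E]
    [MeasurableSpace E] [OpensMeasurableSpace E] (μ : Measure E) {a : ℝ} (ha : 0 ≤ a)
    (ρ : E → ℝ) (X : E) :
    ∫⁻ x in {x | 1 < ‖X - x‖}, ENNReal.ofReal (‖X - x‖ ^ (-a) * ρ x) ∂μ ≤ ∫⁻ x, ‖ρ x‖ₑ ∂μ := by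
  have hB : MeasurableSet {x | 1 < ‖X - x‖} :=
    measurableSet_lt measurable_const (continuous_const.sub continuous_id).norm.measurable
  refine (lintegral_mono_ae ((ae_restrict_iff' hB).2 (.of_forall fun x hx => ?_))).trans
    (setLIntegral_le_lintegral _ _)
  have hk₁ : ‖X - x‖ ^ (-a) ≤ 1 := Real.rpow_le_one_of_one_le_of_nonpos hx.le (neg_nonpos.2 ha)
  rw [Real.enorm_eq_ofReal_abs]
  exact ENNReal.ofReal_le_ofReal ((mul_le_mul_of_nonneg_left (le_abs_self _) (by positivity)).trans
    (mul_le_of_le_one_left (abs_nonneg _) hk₁))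

section

variable {E : Type*} [NormedAddCommGroup E] [NormedSpace ℝ E] [FiniteDimensional ℝ E]
  [MeasurableSpace E] [BorelSpace E] [Nontrivial E] (μ : Measure E) [μ.IsAddHaarMeasure]

theorem integral_annulus_norm_rpow_neg_finrank {r R : ℝ} (hr : 0 < r) (hrR : r ≤ R) :
    ∫ z in {z : E | r ≤ ‖z‖ ∧ ‖z‖ ≤ R}, ‖z‖ ^ (-(finrank ℝ E : ℝ)) ∂μ =
      finrank ℝ E * μ.real (ball 0 1) * Real.log (R / r) := by
  set n := finrank ℝ E
  have hn : 0 < n := finrank_pos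
  have hradial : ∫ y in Ioi (0 : ℝ), y ^ (n - 1) • (Icc r R).indicator (· ^ (-(n : ℝ))) y =
      Real.log (R / r) :=
    calc _ = ∫ y in Ioi (0 : ℝ), (Icc r R).indicator (·⁻¹) y := by
          -- the radial weight `y ^ (n - 1)` cancels `y ^ (-n)` down to `y⁻¹`
          refine setIntegral_congr_fun measurableSet_Ioi fun y (hy : 0 < y) => ?_
          by_cases h : y ∈ Icc r R
          · rw [indicator_of_mem h, indicator_of_mem h, smul_eq_mul, ← Real.rpow_natCast,
              ← Real.rpow_add hy, Nat.cast_sub hn, Nat.cast_one,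
              show (n : ℝ) - 1 + -n = -1 by ring, Real.rpow_neg_one]
          · simp [h]
      _ = ∫ y in Icc r R, y⁻¹ := by
          rw [setIntegral_indicator measurableSet_Icc,
            inter_eq_self_of_subset_right fun y (hy : y ∈ Icc r R) =>
              mem_Ioi.2 (hr.trans_le hy.1)]
      _ = Real.log (R / r) := by
          rw [integral_Icc_eq_integral_Ioc, ← intervalIntegral.integral_of_le hrR,
            integral_inv_of_pos hr (hr.trans_le hrR)]
  have hset : {z : E | r ≤ ‖z‖ ∧ ‖z‖ ≤ R} = (‖·‖) ⁻¹' Icc r R := rfl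
  rw [hset, ← integral_indicator (measurable_norm measurableSet_Icc)]
  simp_rw [← Function.comp_apply (f := fun t : ℝ => t ^ (-(n : ℝ))) (g := (‖·‖)),
    indicator_comp_right]
  rw [integral_fun_norm_addHaar μ, hradial, nsmul_eq_mul, smul_eq_mul, mul_assoc]

theorem lintegral_annulus_sub_norm_rpow_neg_finrank {r R : ℝ} (hr : 0 < r) (hrR : r ≤ R)
    (X : E) :
    ∫⁻ x in {x : E | r ≤ ‖X - x‖ ∧ ‖X - x‖ ≤ R},
        ENNReal.ofReal (‖X - x‖ ^ (-(finrank ℝ E : ℝ))) ∂μ =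
      ENNReal.ofReal (finrank ℝ E * μ.real (ball 0 1) * Real.log (R / r)) := by
  set A := {z : E | r ≤ ‖z‖ ∧ ‖z‖ ≤ R}
  have hA : MeasurableSet A := measurable_norm measurableSet_Icc
  have hbounded : IntegrableOn (fun z : E => ‖z‖ ^ (-(finrank ℝ E : ℝ))) A μ := by
    refine Measure.integrableOn_of_bounded (M := r ^ (-(finrank ℝ E : ℝ))) ?_
      (measurable_norm.pow_const _).aestronglyMeasurable ?_
    · exact ((measure_mono fun z (hz : z ∈ A) => mem_closedBall_zero_iff.2 hz.2).trans_lt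
        measure_closedBall_lt_top).ne
    · refine (ae_restrict_iff' hA).2 (.of_forall fun z hz => ?_)
      rw [Real.norm_of_nonneg (by positivity)]
      exact Real.rpow_le_rpow_of_nonpos hr hz.1 (by simp)
  calc _ = ∫⁻ z in A, ENNReal.ofReal (‖z‖ ^ (-(finrank ℝ E : ℝ))) ∂μ :=
        (Measure.measurePreserving_sub_left μ X).setLIntegral_comp_preimage hA
          (measurable_norm.pow_const _).ennreal_ofReal
    _ = _ := by
        rw [← ofReal_integral_eq_lintegral_ofReal hbounded (.of_forall fun _ => by positivity),
          integral_annulus_norm_rpow_neg_finrank μ hr hrR]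

theorem lintegral_annulus_sub_norm_rpow_neg_mul_le {a : ℝ} (ha : 0 < a) (han : a < finrank ℝ E)
    {r R : ℝ} (hr : 0 < r) (hrR : r ≤ R) {ρ : E → ℝ} (hρ : AEMeasurable ρ μ) (X : E) :
    ∫⁻ x in {x | r ≤ ‖X - x‖ ∧ ‖X - x‖ ≤ R}, ENNReal.ofReal (‖X - x‖ ^ (-a) * ρ x) ∂μ ≤
      eLpNorm ρ (ENNReal.ofReal (finrank ℝ E / (finrank ℝ E - a))) μ *
        ENNReal.ofReal
          ((finrank ℝ E * μ.real (ball 0 1) * Real.log (R / r)) ^ (a / finrank ℝ E)) := by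
  set n : ℝ := (finrank ℝ E : ℝ)
  set A := {x | r ≤ ‖X - x‖ ∧ ‖X - x‖ ≤ R}
  set p := n / (n - a) with hp_def
  set q := n / a with hq_def
  have hna : 0 < n - a := sub_pos.2 han
  have hp : 0 < p := div_pos (ha.trans han) hna
  have hpq : p.HolderConjugate q := by
    rw [Real.holderConjugate_iff]
    refine ⟨(one_lt_div hna).2 (by linarith), ?_⟩
    rw [hp_def, hq_def, inv_div, inv_div, ← add_div, sub_add_cancel, div_self (by linarith)]
  have hkernel : Measurable fun x => ENNReal.ofReal (‖X - x‖ ^ (-a)) :=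
    ((measurable_const.sub measurable_id).norm.pow_const _).ennreal_ofReal
  have hρfactor : (∫⁻ x in A, ‖ρ x‖ₑ ^ p ∂μ) ^ (1 / p) ≤ eLpNorm ρ (ENNReal.ofReal p) μ := by
    have h := eLpNorm_eq_lintegral_rpow_enorm_toReal (μ := μ.restrict A) (f := ρ)
      (ENNReal.ofReal_pos.2 hp).ne' ENNReal.ofReal_ne_top
    rw [ENNReal.toReal_ofReal hp.le] at h
    exact h ▸ eLpNorm_restrict_le _ _ _ _
  have hkernel_factor : (∫⁻ x in A, ENNReal.ofReal (‖X - x‖ ^ (-a)) ^ q ∂μ) ^ (1 / q) =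
      ENNReal.ofReal ((n * μ.real (ball 0 1) * Real.log (R / r)) ^ (a / n)) := by
    have hpow : ∀ x, ENNReal.ofReal (‖X - x‖ ^ (-a)) ^ q = ENNReal.ofReal (‖X - x‖ ^ (-n)) := by
      intro x
      rw [ENNReal.ofReal_rpow_of_nonneg (by positivity) (by positivity),
        ← Real.rpow_mul (norm_nonneg _), hq_def, neg_mul, mul_div_cancel₀ _ ha.ne']
    simp_rw [hpow]
    rw [lintegral_annulus_sub_norm_rpow_neg_finrank μ hr hrR X, one_div_div]
    exact ENNReal.ofReal_rpow_of_nonneg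
      (mul_nonneg (by positivity) (Real.log_nonneg ((one_le_div hr).2 hrR))) (by positivity)
  calc ∫⁻ x in A, ENNReal.ofReal (‖X - x‖ ^ (-a) * ρ x) ∂μ
      ≤ ∫⁻ x in A, ‖ρ x‖ₑ * ENNReal.ofReal (‖X - x‖ ^ (-a)) ∂μ := by
        refine lintegral_mono fun x => ?_
        rw [mul_comm, ENNReal.ofReal_mul' (by positivity)]
        exact mul_le_mul_left (Real.ofReal_le_enorm _) _
    _ ≤ (∫⁻ x in A, ‖ρ x‖ₑ ^ p ∂μ) ^ (1 / p) *
          (∫⁻ x in A, ENNReal.ofReal (‖X - x‖ ^ (-a)) ^ q ∂μ) ^ (1 / q) :=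
        ENNReal.lintegral_mul_le_Lp_mul_Lq _ hpq hρ.enorm.restrict hkernel.aemeasurable
    _ ≤ _ := by
        rw [hkernel_factor]
        exact mul_le_mul_left hρfactor _

theorem setIntegral_sub_norm_rpow_neg_mul_le {a : ℝ} (ha : 0 < a) (han : a < finrank ℝ E)
    {r : ℝ} (hr : 0 < r) (hr1 : r ≤ 1) {ρ : E → ℝ} (hρ0 : ∀ x, 0 ≤ ρ x) (hρ : Integrable ρ μ)
    (hρp : MemLp ρ (ENNReal.ofReal (finrank ℝ E / (finrank ℝ E - a))) μ) (X : E) :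
    ∫ x in {x | r ≤ ‖X - x‖}, ‖X - x‖ ^ (-a) * ρ x ∂μ ≤
      (eLpNorm ρ (ENNReal.ofReal (finrank ℝ E / (finrank ℝ E - a))) μ).toReal *
          (finrank ℝ E * μ.real (ball 0 1) * Real.log (1 / r)) ^ (a / finrank ℝ E) +
        ∫ x, ρ x ∂μ := by
  have hnorm : Measurable fun x => ‖X - x‖ := (measurable_const.sub measurable_id).norm
  have hsplit : {x | r ≤ ‖X - x‖} ⊆ {x | r ≤ ‖X - x‖ ∧ ‖X - x‖ ≤ 1} ∪ {x | 1 < ‖X - x‖} :=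
    fun x hx => (le_or_gt ‖X - x‖ 1).imp (⟨hx, ·⟩) id
  have hmeas : AEStronglyMeasurable (fun x => ‖X - x‖ ^ (-a) * ρ x) μ :=
    (hnorm.pow_const _).aestronglyMeasurable.mul hρ.aestronglyMeasurable
  rw [integral_eq_lintegral_of_nonneg_ae
    (.of_forall fun x => mul_nonneg (by positivity) (hρ0 x)) hmeas.restrict]
  have hm : 0 ≤ (finrank ℝ E * μ.real (ball 0 1) * Real.log (1 / r)) ^ (a / finrank ℝ E) :=
    Real.rpow_nonneg (mul_nonneg (by positivity) (Real.log_nonneg ((one_le_div hr).2 hr1))) _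
  have hNm :=
    mul_nonneg (eLpNorm ρ (ENNReal.ofReal (finrank ℝ E / (finrank ℝ E - a))) μ).toReal_nonneg hm
  refine ENNReal.toReal_le_of_le_ofReal (add_nonneg hNm (integral_nonneg hρ0)) ?_
  calc _ ≤ (∫⁻ x in {x | r ≤ ‖X - x‖ ∧ ‖X - x‖ ≤ 1}, ENNReal.ofReal (‖X - x‖ ^ (-a) * ρ x) ∂μ) +
        ∫⁻ x in {x | 1 < ‖X - x‖}, ENNReal.ofReal (‖X - x‖ ^ (-a) * ρ x) ∂μ :=
        (lintegral_mono_set hsplit).trans (lintegral_union_le _ _ _)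
    _ ≤ _ := add_le_add
        (lintegral_annulus_sub_norm_rpow_neg_mul_le μ ha han hr hr1 hρ.aemeasurable X)
        (lintegral_one_lt_sub_norm_rpow_neg_mul_le μ ha.le ρ X)
    _ = _ := by
        rw [ENNReal.ofReal_add hNm (integral_nonneg hρ0),
          ENNReal.ofReal_mul ENNReal.toReal_nonneg, ENNReal.ofReal_toReal hρp.eLpNorm_ne_top,
          ofReal_integral_eq_lintegral_ofReal hρ (.of_forall hρ0)]
        simp_rw [Real.enorm_eq_ofReal (hρ0 _)]

end

theorem stmt_10 (d : ℕ) (hd : 1 ≤ d) :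
    ∃ C > 0, ∀ a : ℝ, 0 < a → a < d → ∀ r : ℝ, 0 < r → r ≤ 1 →
      ∀ ρ : EuclideanSpace ℝ (Fin d) → ℝ, (∀ x, 0 ≤ ρ x) →
        Integrable ρ →
        MemLp ρ (ENNReal.ofReal ((d : ℝ) / (d - a))) volume →
        ∀ X : EuclideanSpace ℝ (Fin d),
          ∫ x in {x | r ≤ ‖X - x‖}, ‖X - x‖ ^ (-a) * ρ x ≤
            C * ((eLpNorm ρ (ENNReal.ofReal ((d : ℝ) / (d - a))) volume).toReal
                  + ∫ x, ρ x) * (1 + Real.log (1 / r)) := by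
  have : Nonempty (Fin d) := ⟨⟨0, hd⟩⟩
  set c := (d : ℝ) * volume.real (ball (0 : EuclideanSpace ℝ (Fin d)) 1)
  refine ⟨1 + c, by positivity, fun a ha had r hr hr1 ρ hρ0 hρ hρp X => ?_⟩
  have key := setIntegral_sub_norm_rpow_neg_mul_le volume ha
    (by rwa [finrank_euclideanSpace_fin])
    hr hr1 hρ0 hρ (by rwa [finrank_euclideanSpace_fin]) X
  rw [finrank_euclideanSpace_fin] at key
  set N := (eLpNorm ρ (ENNReal.ofReal ((d : ℝ) / (d - a))) volume).toReal
  set L := Real.log (1 / r)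
  have hN : 0 ≤ N := ENNReal.toReal_nonneg
  have hI : 0 ≤ ∫ x, ρ x := integral_nonneg hρ0
  have hL : 0 ≤ L := Real.log_nonneg ((one_le_div hr).2 hr1)
  have hc : 0 ≤ c := by positivity
  have hpow : (c * L) ^ (a / d) ≤ 1 + c * L :=
    rpow_le_one_add_self (mul_nonneg hc hL) (by positivity) ((div_le_one (by positivity)).2 had.le)
  calc _ ≤ N * (c * L) ^ (a / d) + ∫ x, ρ x := key
    _ ≤ N * (1 + c * L) + ∫ x, ρ x := by gcongr
    _ ≤ (1 + c) * (N + ∫ x, ρ x) * (1 + L) := by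
        nlinarith [mul_nonneg hc hL, mul_nonneg hc hN, mul_nonneg hL hN,
          mul_nonneg (mul_nonneg hc hL) hI, mul_nonneg hc hI, mul_nonneg hL hI]
end

section
/- Let a_k ∈ (1,2), k ∈ (1, a_k), r ∈ (0, 1/2), and let φ : ℝ≥0 → [0,1] be smooth, nonincreasing with φ = 1 on [0,r] and φ = 0 on [2r,∞). Define m(x) = φ(|x|)|x|^{a_k} + (1−φ(|x|))|x|^k for x ∈ ℝ^d and m'(s) the radial derivative. Then for all x with r ≤ |x| ≤ 2r, m'(|x|)|x| ≥ k|x|^{a_k}. -/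
theorem stmt_16 (d : ℕ) (a k r : ℝ) (ha : a ∈ Set.Ioo (1:ℝ) 2) (hk : k ∈ Set.Ioo (1:ℝ) a)
    (hr : r ∈ Set.Ioo (0:ℝ) (1/2))
    (φ : ℝ → ℝ) (hφ : ContDiff ℝ (⊤ : ℕ∞) φ) (hφanti : AntitoneOn φ (Set.Ici 0))
    (hφ01 : ∀ s, 0 ≤ φ s ∧ φ s ≤ 1)
    (hφ1 : ∀ s : ℝ, 0 ≤ s → s ≤ r → φ s = 1)
    (hφ0 : ∀ s : ℝ, 2 * r ≤ s → φ s = 0) :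
    ∀ x : EuclideanSpace ℝ (Fin d), r ≤ ‖x‖ → ‖x‖ ≤ 2 * r →
      k * ‖x‖ ^ a ≤ deriv (fun s : ℝ => φ s * s ^ a + (1 - φ s) * s ^ k) ‖x‖ * ‖x‖ := by
  intro x hxl hxu
  set s : ℝ := ‖x‖ with hs
  have hs0 : (0:ℝ) < s := lt_of_lt_of_le hr.1 hxl
  have hs1 : s < 1 := by nlinarith [hr.2]
  have hφd : HasDerivAt φ (deriv φ s) s :=
    ((hφ.differentiable (by simp)) s).hasDerivAt
  have hpa : HasDerivAt (fun t : ℝ => t ^ a) (a * s ^ (a - 1)) s :=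
    Real.hasDerivAt_rpow_const (Or.inl hs0.ne')
  have hpk : HasDerivAt (fun t : ℝ => t ^ k) (k * s ^ (k - 1)) s :=
    Real.hasDerivAt_rpow_const (Or.inl hs0.ne')
  have hD : HasDerivAt (fun t : ℝ => φ t * t ^ a + (1 - φ t) * t ^ k)
      (deriv φ s * s ^ a + φ s * (a * s ^ (a - 1)) +
        ((0 - deriv φ s) * s ^ k + (1 - φ s) * (k * s ^ (k - 1)))) s :=
    (hφd.mul hpa).add (((hasDerivAt_const s (1:ℝ)).sub hφd).mul hpk)
  rw [hD.deriv]
  -- derivative of φ is nonpositive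
  have hdφ : deriv φ s ≤ 0 := by
    have ht : Filter.Tendsto (slope φ s) (nhdsWithin s (Set.Ioi s)) (nhds (deriv φ s)) :=
      (hasDerivAt_iff_tendsto_slope.mp hφd).mono_left
        (nhdsWithin_mono s (fun t ht => ne_of_gt ht))
    refine le_of_tendsto ht ?_
    filter_upwards [self_mem_nhdsWithin] with t (ht : s < t)
    have hφt : φ t ≤ φ s := hφanti hs0.le (le_of_lt (hs0.trans ht)) ht.le
    rw [slope_def_field]
    exact div_nonpos_of_nonpos_of_nonneg (by linarith) (by linarith)
  have hφs := hφ01 s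
  have hak : k ≤ a := le_of_lt hk.2
  have h1 : s ^ a ≤ s ^ k := Real.rpow_le_rpow_of_exponent_ge hs0 hs1.le hak
  have h2 : s ^ (a + 1) ≤ s ^ (k + 1) :=
    Real.rpow_le_rpow_of_exponent_ge hs0 hs1.le (by linarith)
  have hpow_a : s ^ (a - 1) * s = s ^ a := by
    rw [show s ^ a = s ^ (a - 1 + 1) by norm_num, Real.rpow_add hs0, Real.rpow_one]
  have hpow_k : s ^ (k - 1) * s = s ^ k := by
    rw [show s ^ k = s ^ (k - 1 + 1) by norm_num, Real.rpow_add hs0, Real.rpow_one]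
  have hpow_a1 : s ^ a * s = s ^ (a + 1) := by
    rw [Real.rpow_add hs0, Real.rpow_one]
  have hpow_k1 : s ^ k * s = s ^ (k + 1) := by
    rw [Real.rpow_add hs0, Real.rpow_one]
  have hsa0 : (0:ℝ) ≤ s ^ a := (Real.rpow_pos_of_pos hs0 a).le
  have hdnonneg : 0 ≤ (-(deriv φ s)) * (s ^ (k + 1) - s ^ (a + 1)) :=
    mul_nonneg (neg_nonneg.2 hdφ) (by linarith)
  have expand : (deriv φ s * s ^ a + φ s * (a * s ^ (a - 1)) +
      ((0 - deriv φ s) * s ^ k + (1 - φ s) * (k * s ^ (k - 1)))) * s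
      = (-(deriv φ s)) * (s ^ (k + 1) - s ^ (a + 1)) + φ s * a * s ^ a
        + (1 - φ s) * k * s ^ k := by
    linear_combination (deriv φ s) * hpow_a1 + φ s * a * hpow_a +
      (-(deriv φ s)) * hpow_k1 + (1 - φ s) * k * hpow_k
  rw [expand]
  nlinarith [mul_nonneg hφs.1 hsa0,
    mul_nonneg (by linarith [hφs.2] : (0:ℝ) ≤ 1 - φ s)
      (by linarith : (0:ℝ) ≤ s ^ k - s ^ a), hk.1]
end

section
/- Let C₁, C₂, C₄, λ, M₀ > 0 with C₂ λ M₀ ≥ 8 C₁, and let Y : [0,T) → ℝ≥0 be differentiable with Y(0)² ≤ M₀²/(2C₄) and satisfying Y'(t) ≤ C₁M₀ + (C₂/2)λ(C₄ Y(t)² − M₀²) for all t. Then Y(t) ≤ Y(0) − C₁ M₀ t for all t ∈ [0,T), and consequently T ≤ Y(0)/(C₁M₀). -/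
/-!
On the region `0 ≤ Y ≤ Y 0` we have `C₄ Y² ≤ M₀² / 2`, so the differential inequality gives
`Y' ≤ C₁ M₀ - (C₂ / 4) λ M₀² ≤ -C₁ M₀`. Comparing `Y` with the lines `Y 0 - (C₁ M₀ - ε) t`,
which stay below `Y 0` and which `Y` can only touch while decreasing strictly faster, shows that
`Y` stays in this region and decreases at least linearly with slope `C₁ M₀`. Since `Y ≥ 0`, this
bounds the length of the time interval.
-/

open Set Filter Topology

theorem le_sub_mul_of_deriv_right_le_neg_of_le {f f' : ℝ → ℝ} {a b c : ℝ} (hc : 0 < c)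
    (hf : ContinuousOn f (Icc a b)) (hf' : ∀ x ∈ Ico a b, HasDerivWithinAt f (f' x) (Ici x) x)
    (bound : ∀ x ∈ Ico a b, f x ≤ f a → f' x ≤ -c) :
    ∀ x ∈ Icc a b, f x ≤ f a - c * (x - a) := by
  intro x hx
  have below_line : ∀ d ∈ Ioo 0 c, f x ≤ f a - d * (x - a) := by
    rintro d ⟨hd₀, hdc⟩
    have hline (y : ℝ) : HasDerivAt (fun y => f a - d * (y - a)) (-d) y := by
      simpa using (((hasDerivAt_id y).sub_const a).const_mul d).const_sub (f a)
    refine image_le_of_deriv_right_lt_deriv_boundary hf hf' (by simp) hline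
      (fun y hy hfy => ?_) hx
    have : f y ≤ f a := by rw [hfy]; nlinarith [hy.1]
    linarith [bound y hy this]
  have hlim : Tendsto (fun d => f a - d * (x - a)) (𝓝[<] c) (𝓝 (f a - c * (x - a))) :=
    ((continuous_const.sub (continuous_id.mul continuous_const)).tendsto c).mono_left
      nhdsWithin_le_nhds
  exact ge_of_tendsto hlim (eventually_of_mem (Ioo_mem_nhdsLT hc) below_line)

theorem rhs_le_neg_of_sq_le {C₁ C₂ C₄ lam M₀ y : ℝ} (hC₂lam : 0 ≤ C₂ * lam) (hM : 0 ≤ M₀)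
    (hbig : 8 * C₁ ≤ C₂ * lam * M₀) (hy : C₄ * y ^ 2 ≤ M₀ ^ 2 / 2) :
    C₁ * M₀ + (C₂ / 2) * lam * (C₄ * y ^ 2 - M₀ ^ 2) ≤ -(C₁ * M₀) := by
  nlinarith [mul_le_mul_of_nonneg_left hy hC₂lam, mul_le_mul_of_nonneg_right hbig hM]

theorem mul_sq_le_of_sq_le_div {C₄ M₀ y y₀ : ℝ} (hC₄ : 0 < C₄) (hy : 0 ≤ y) (hyy₀ : y ≤ y₀)
    (hy₀ : y₀ ^ 2 ≤ M₀ ^ 2 / (2 * C₄)) : C₄ * y ^ 2 ≤ M₀ ^ 2 / 2 := by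
  rw [le_div_iff₀ (by positivity)] at hy₀
  nlinarith [pow_le_pow_left₀ hy hyy₀ 2]

theorem stmt_18 (T C₁ C₂ C₄ lam M₀ : ℝ) (hT : 0 < T) (hC₁ : 0 < C₁) (hC₂ : 0 < C₂)
    (hC₄ : 0 < C₄) (hlam : 0 < lam) (hM : 0 < M₀)
    (hbig : 8 * C₁ ≤ C₂ * lam * M₀)
    (Y D : ℝ → ℝ)
    (hY : ∀ t : ℝ, 0 ≤ t → t < T → HasDerivAt Y (D t) t)
    (hD : ∀ t : ℝ, 0 ≤ t → t < T →
      D t ≤ C₁ * M₀ + (C₂ / 2) * lam * (C₄ * (Y t) ^ 2 - M₀ ^ 2))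
    (hnn : ∀ t : ℝ, 0 ≤ t → t < T → 0 ≤ Y t)
    (hY0 : (Y 0) ^ 2 ≤ M₀ ^ 2 / (2 * C₄)) :
    (∀ t : ℝ, 0 ≤ t → t < T → Y t ≤ Y 0 - C₁ * M₀ * t) ∧ T ≤ Y 0 / (C₁ * M₀) := by
  have hrate : 0 < C₁ * M₀ := mul_pos hC₁ hM
  have hdecay : ∀ t : ℝ, 0 ≤ t → t < T → Y t ≤ Y 0 - C₁ * M₀ * t := by
    intro t ht htT
    have hYt := le_sub_mul_of_deriv_right_le_neg_of_le hrate
      (fun x hx => (hY x hx.1 (hx.2.trans_lt htT)).continuousAt.continuousWithinAt)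
      (fun x hx => (hY x hx.1 (hx.2.trans htT)).hasDerivWithinAt)
      (fun x hx hYx => (hD x hx.1 (hx.2.trans htT)).trans <|
        rhs_le_neg_of_sq_le (mul_pos hC₂ hlam).le hM.le hbig <|
          mul_sq_le_of_sq_le_div hC₄ (hnn x hx.1 (hx.2.trans htT)) hYx hY0)
      t ⟨ht, le_rfl⟩
    simpa using hYt
  refine ⟨hdecay, le_of_forall_lt_imp_le_of_dense fun s hs => ?_⟩
  rw [le_div_iff₀ hrate]
  rcases lt_or_ge s 0 with hs₀ | hs₀
  · nlinarith [hnn 0 le_rfl hT]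
  · linarith [hdecay s hs₀ hs, hnn s hs₀ hs]
end
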